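/- Equivalence of the finite reduction and the ambiguous dual best problem: under assumptions (G), (C), (H) and (S), the suprema of (FR) and (AD-B) coincide, and (FR) is solvable if and only if (AD-B) is solvable. -/

import Mathlib

noncomputable section
open scoped BigOperators Classical ENNReal
open MeasureTheory

/-- Dot product on `ℝ^n`. -/
def dotp {n : ℕ} (x y : Fin n → ℝ) : ℝ := ∑ i, x i * y i

/-- The (effective) domain of an extended-real-valued function. -/
def edom {n : ℕ} (f : (Fin n → ℝ) → EReal) : Set (Fin n → ℝ) := {x | f x < ⊤}

/-- `f` is proper: it never takes the value `−∞` and is `< +∞` somewhere. -/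
def ProperFn {n : ℕ} (f : (Fin n → ℝ) → EReal) : Prop := (∀ x, f x ≠ ⊥) ∧ (∃ x, f x ≠ ⊤)

/-- `f` is closed: lower semicontinuous, and either nowhere `−∞` or identically `−∞`. -/
def ClosedFn {n : ℕ} (f : (Fin n → ℝ) → EReal) : Prop :=
  LowerSemicontinuous f ∧ ((∀ x, f x ≠ ⊥) ∨ (∀ x, f x = ⊥))

/-- Convexity of an extended-real-valued function, via convexity of its epigraph. -/
def ConvexFn {n : ℕ} (f : (Fin n → ℝ) → EReal) : Prop :=
  Convex ℝ {p : (Fin n → ℝ) × ℝ | f p.1 ≤ (p.2 : EReal)}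

/-- The conjugate `f*(w) = sup_x { wᵀx − f(x) }`. -/
def conjFn {n : ℕ} (f : (Fin n → ℝ) → EReal) (w : Fin n → ℝ) : EReal :=
  ⨆ x : Fin n → ℝ, (((dotp w x : ℝ) : EReal) - f x)

/-- The support function `δ*_X(w) = sup_{x ∈ X} xᵀw`. -/
def suppFn {n : ℕ} (X : Set (Fin n → ℝ)) (w : Fin n → ℝ) : EReal :=
  ⨆ x ∈ X, ((dotp x w : ℝ) : EReal)

/-- The convex perspective `t f(x/t)` of a proper closed convex function `f`,
equal to `t f(x/t)` for `t > 0` and to `δ*_{dom f*}(x)` for `t = 0`. -/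
def persp {n : ℕ} (f : (Fin n → ℝ) → EReal) (x : Fin n → ℝ) (t : ℝ) : EReal :=
  if 0 < t then (t : EReal) * f (t⁻¹ • x) else suppFn (edom (conjFn f)) x

/-- The concave perspective `t g(x/t)` of a function `g` with `−g` proper, closed and
convex, equal to `t g(x/t)` for `t > 0` and to `−δ*_{dom (−g)*}(x)` for `t = 0`. -/
def cpersp {n : ℕ} (g : (Fin n → ℝ) → EReal) (x : Fin n → ℝ) (t : ℝ) : EReal :=
  if 0 < t then (t : EReal) * g (t⁻¹ • x)
  else - suppFn (edom (conjFn (fun z => - g z))) x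

/-- `f` is an affine ("linear") constraint function. -/
def IsAffineFn {n : ℕ} (f : (Fin n → ℝ) → EReal) : Prop :=
  ∃ (a : Fin n → ℝ) (b : ℝ), ∀ x, f x = ((dotp a x + b : ℝ) : EReal)

/-- Positive part of an extended real number, as an extended non-negative real. -/
def epos (x : EReal) : ℝ≥0∞ := if x = ⊤ then ⊤ else ENNReal.ofReal x.toReal

/-- Expectation `E_P[f(z̃)]` with the convention that it equals `−∞` whenever the
expectations of the positive and negative parts of `f(z̃)` are both infinite
(infeasibility dominates in maximization). -/
def lowExp {n : ℕ} (P : Measure (Fin n → ℝ)) (f : (Fin n → ℝ) → EReal) : EReal :=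
  ((∫⁻ z, epos (f z) ∂P : ℝ≥0∞) : EReal) - ((∫⁻ z, epos (-(f z)) ∂P : ℝ≥0∞) : EReal)

/-- Expectation `E_P[f(z̃)]` with the convention that it equals `+∞` whenever the
expectations of the positive and negative parts of `f(z̃)` are both infinite
(infeasibility dominates in the moment constraints). -/
def highExp {n : ℕ} (P : Measure (Fin n → ℝ)) (f : (Fin n → ℝ) → EReal) : EReal :=
  - lowExp P (fun z => - f z)

variable {dz I J L : ℕ}

/-- Assumption (G): `−g_i` is proper, closed and convex for each `i`. -/
def AssumptionG (gi : Fin I → (Fin dz → ℝ) → EReal) : Prop :=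
  ∀ i, ProperFn (fun z => - gi i z) ∧ ClosedFn (fun z => - gi i z) ∧
    ConvexFn (fun z => - gi i z)

/-- Assumption (C): each `c_ℓ` is proper, closed and convex. -/
def AssumptionC (c : Fin L → (Fin dz → ℝ) → EReal) : Prop :=
  ∀ ℓ, ProperFn (c ℓ) ∧ ClosedFn (c ℓ) ∧ ConvexFn (c ℓ)

/-- Assumption (H): each `h_j` is proper, closed and convex. -/
def AssumptionH (h : Fin J → (Fin dz → ℝ) → EReal) : Prop :=
  ∀ j, ProperFn (h j) ∧ ClosedFn (h j) ∧ ConvexFn (h j)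

/-- The support set `S = {z : c_ℓ(z) ≤ 0 ∀ℓ}`. -/
def Sset (c : Fin L → (Fin dz → ℝ) → EReal) : Set (Fin dz → ℝ) :=
  {z | ∀ ℓ, c ℓ z ≤ 0}

/-- The set `S̄_i = {z ∈ S : z ∈ dom h_j ∀j, z ∈ dom(−g_i)}`. -/
def SbarI (gi : Fin I → (Fin dz → ℝ) → EReal) (c : Fin L → (Fin dz → ℝ) → EReal)
    (h : Fin J → (Fin dz → ℝ) → EReal) (i : Fin I) : Set (Fin dz → ℝ) :=
  {z | z ∈ Sset c ∧ (∀ j, h j z < ⊤) ∧ ⊥ < gi i z}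

/-- The effective support set `S̄ = ∪_i S̄_i`. -/
def Sbar (gi : Fin I → (Fin dz → ℝ) → EReal) (c : Fin L → (Fin dz → ℝ) → EReal)
    (h : Fin J → (Fin dz → ℝ) → EReal) : Set (Fin dz → ℝ) :=
  ⋃ i, SbarI gi c h i

/-- Assumption (S): each `S̄_i` is nonempty. -/
def AssumptionS (gi : Fin I → (Fin dz → ℝ) → EReal)
    (c : Fin L → (Fin dz → ℝ) → EReal) (h : Fin J → (Fin dz → ℝ) → EReal) : Prop :=
  ∀ i, (SbarI gi c h i).Nonempty

/-- The disutility function `g(z) = max_i g_i(z)`. -/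
def gFun (gi : Fin I → (Fin dz → ℝ) → EReal) (z : Fin dz → ℝ) : EReal :=
  ⨆ i, gi i z

/-- The ambiguity set `𝒫` of all probability distributions supported on `S`
satisfying the moment conditions `E_P[h_j(z̃)] ≤ μ_j`. -/
def ambSet (c : Fin L → (Fin dz → ℝ) → EReal) (h : Fin J → (Fin dz → ℝ) → EReal)
    (μ : Fin J → ℝ) : Set (Measure (Fin dz → ℝ)) :=
  {P | IsProbabilityMeasure P ∧ P (Sset c) = 1 ∧
       ∀ j, highExp P (h j) ≤ ((μ j : ℝ) : EReal)}

/-- Optimal value of the primal uncertainty quantification problem (P-UQ). -/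
def puqVal (gi : Fin I → (Fin dz → ℝ) → EReal) (c : Fin L → (Fin dz → ℝ) → EReal)
    (h : Fin J → (Fin dz → ℝ) → EReal) (μ : Fin J → ℝ) : EReal :=
  ⨆ P ∈ {P | P ∈ ambSet c h μ ∧ lowExp P (gFun gi) ≠ ⊥}, lowExp P (gFun gi)

/-- Feasible region of the dual uncertainty quantification problem (D-UQ). -/
def duqFeas (gi : Fin I → (Fin dz → ℝ) → EReal) (c : Fin L → (Fin dz → ℝ) → EReal)
    (h : Fin J → (Fin dz → ℝ) → EReal) : Set (ℝ × (Fin J → ℝ)) :=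
  {p | (∀ j, 0 ≤ p.2 j) ∧
       ∀ z ∈ Sbar gi c h, gFun gi z ≤ (p.1 : EReal) + ∑ j, (p.2 j : EReal) * h j z}

/-- Optimal value of the dual uncertainty quantification problem (D-UQ). -/
def duqVal (gi : Fin I → (Fin dz → ℝ) → EReal) (c : Fin L → (Fin dz → ℝ) → EReal)
    (h : Fin J → (Fin dz → ℝ) → EReal) (μ : Fin J → ℝ) : EReal :=
  ⨅ p ∈ duqFeas gi c h, ((p.1 + dotp μ p.2 : ℝ) : EReal)

/-- (D-UQ) is solvable. -/
def duqSolvable (gi : Fin I → (Fin dz → ℝ) → EReal) (c : Fin L → (Fin dz → ℝ) → EReal)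
    (h : Fin J → (Fin dz → ℝ) → EReal) (μ : Fin J → ℝ) : Prop :=
  duqFeas gi c h = ∅ ∨
    ∃ p ∈ duqFeas gi c h, ((p.1 + dotp μ p.2 : ℝ) : EReal) = duqVal gi c h μ

/-- The augmented support set
`U_i = {(z,u,t) : c_ℓ(z) ≤ 0 ∀ℓ, h(z) ≤ u, g_i(z) ≥ t}`. -/
def Uset {dz I J L : ℕ} (gi : Fin I → (Fin dz → ℝ) → EReal)
    (c : Fin L → (Fin dz → ℝ) → EReal) (h : Fin J → (Fin dz → ℝ) → EReal)
    (i : Fin I) : Set ((Fin dz → ℝ) × (Fin J → ℝ) × ℝ) :=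
  {q | (∀ ℓ, c ℓ q.1 ≤ 0) ∧ (∀ j, h j q.1 ≤ ((q.2.1 j : ℝ) : EReal)) ∧
       ((q.2.2 : ℝ) : EReal) ≤ gi i q.1}

/-- Feasible region of the ambiguous primal worst problem (AP-W): `β ≥ 0` and
`sup_{(z,u,t) ∈ U_i} { t − α − uᵀβ } ≤ 0` for every `i`. -/
def apwFeas {dz I J L : ℕ} (gi : Fin I → (Fin dz → ℝ) → EReal)
    (c : Fin L → (Fin dz → ℝ) → EReal) (h : Fin J → (Fin dz → ℝ) → EReal) :
    Set (ℝ × (Fin J → ℝ)) :=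
  {p | (∀ j, 0 ≤ p.2 j) ∧
       ∀ i, ∀ q ∈ Uset gi c h i, q.2.2 - p.1 - dotp q.2.1 p.2 ≤ 0}

/-- Optimal value of the ambiguous primal worst problem (AP-W). -/
def apwVal {dz I J L : ℕ} (gi : Fin I → (Fin dz → ℝ) → EReal)
    (c : Fin L → (Fin dz → ℝ) → EReal) (h : Fin J → (Fin dz → ℝ) → EReal)
    (μ : Fin J → ℝ) : EReal :=
  ⨅ p ∈ apwFeas gi c h, ((p.1 + dotp μ p.2 : ℝ) : EReal)

/-- (AP-W) is solvable. -/
def apwSolvable {dz I J L : ℕ} (gi : Fin I → (Fin dz → ℝ) → EReal)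
    (c : Fin L → (Fin dz → ℝ) → EReal) (h : Fin J → (Fin dz → ℝ) → EReal)
    (μ : Fin J → ℝ) : Prop :=
  apwFeas gi c h = ∅ ∨
    ∃ p ∈ apwFeas gi c h, ((p.1 + dotp μ p.2 : ℝ) : EReal) = apwVal gi c h μ

/-- Objective of the finite reduction problem (FR): `Σ_i λ_i g(z_i)`. -/
def frObj {dz I : ℕ} (gi : Fin I → (Fin dz → ℝ) → EReal)
    (p : (Fin I → Fin dz → ℝ) × (Fin I → ℝ)) : EReal :=
  ∑ i, ((p.2 i : ℝ) : EReal) * gFun gi (p.1 i)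

/-- Feasible region of the finite reduction problem (FR). -/
def frFeas {dz I J L : ℕ} (gi : Fin I → (Fin dz → ℝ) → EReal)
    (c : Fin L → (Fin dz → ℝ) → EReal) (h : Fin J → (Fin dz → ℝ) → EReal)
    (μ : Fin J → ℝ) : Set ((Fin I → Fin dz → ℝ) × (Fin I → ℝ)) :=
  {p | (∀ i, p.1 i ∈ Sbar gi c h) ∧ (∀ i, 0 ≤ p.2 i) ∧ (∑ i, p.2 i) = 1 ∧
       (∀ j, (∑ i, ((p.2 i : ℝ) : EReal) * h j (p.1 i)) ≤ ((μ j : ℝ) : EReal)) ∧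
       frObj gi p ≠ ⊥}

/-- Optimal value of the finite reduction problem (FR). -/
def frVal {dz I J L : ℕ} (gi : Fin I → (Fin dz → ℝ) → EReal)
    (c : Fin L → (Fin dz → ℝ) → EReal) (h : Fin J → (Fin dz → ℝ) → EReal)
    (μ : Fin J → ℝ) : EReal :=
  ⨆ p ∈ frFeas gi c h μ, frObj gi p

/-- (FR) is solvable. -/
def frSolvable {dz I J L : ℕ} (gi : Fin I → (Fin dz → ℝ) → EReal)
    (c : Fin L → (Fin dz → ℝ) → EReal) (h : Fin J → (Fin dz → ℝ) → EReal)
    (μ : Fin J → ℝ) : Prop :=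
  frFeas gi c h μ = ∅ ∨ ∃ p ∈ frFeas gi c h μ, frObj gi p = frVal gi c h μ

/-- Feasible region of the ambiguous dual best problem (AD-B). -/
def adbFeas {dz I J L : ℕ} (gi : Fin I → (Fin dz → ℝ) → EReal)
    (c : Fin L → (Fin dz → ℝ) → EReal) (h : Fin J → (Fin dz → ℝ) → EReal)
    (μ : Fin J → ℝ) :
    Set ((Fin I → (Fin dz → ℝ) × (Fin J → ℝ) × ℝ) × (Fin I → ℝ)) :=
  {p | (∀ i, p.1 i ∈ Uset gi c h i) ∧ (∀ i, 0 ≤ p.2 i) ∧ (∑ i, p.2 i) = 1 ∧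
       (∀ j, (∑ i, p.2 i * (p.1 i).2.1 j) ≤ μ j)}

/-- Optimal value of the ambiguous dual best problem (AD-B). -/
def adbVal {dz I J L : ℕ} (gi : Fin I → (Fin dz → ℝ) → EReal)
    (c : Fin L → (Fin dz → ℝ) → EReal) (h : Fin J → (Fin dz → ℝ) → EReal)
    (μ : Fin J → ℝ) : EReal :=
  ⨆ p ∈ adbFeas gi c h μ, (((∑ i, p.2 i * (p.1 i).2.2 : ℝ)) : EReal)

/-- (AD-B) is solvable. -/
def adbSolvable {dz I J L : ℕ} (gi : Fin I → (Fin dz → ℝ) → EReal)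
    (c : Fin L → (Fin dz → ℝ) → EReal) (h : Fin J → (Fin dz → ℝ) → EReal)
    (μ : Fin J → ℝ) : Prop :=
  adbFeas gi c h μ = ∅ ∨
    ∃ p ∈ adbFeas gi c h μ,
      (((∑ i, p.2 i * (p.1 i).2.2 : ℝ)) : EReal) = adbVal gi c h μ

/-!
A feasible point of (AD-B) gives one of (FR) by forgetting the slack variables `u_i, t_i`, and
this can only increase the objective since `t_i ≤ g_i(z_i) ≤ g(z_i)`. Conversely, given a
feasible point of (FR), send every atom `z_i` to an index `σ(i)` with `g(z_i) = g_{σ(i)}(z_i)`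
and merge the atoms sharing an index into their barycentre: the points
`(z_i, h(z_i), g(z_i))` lie in `U_{σ(i)}`, which is convex because `c`, `h` and `−g_k` are, so
the barycentres are feasible and, by linearity, moments and objective are unchanged. An index
that receives no weight gets an arbitrary point of `U_k`, which exists by (S). Since each
problem can be mapped into the other without loss, the suprema agree and optimal solutions
transfer.
-/

open Finset

section SupSolvable

variable {α β γ : Type*} [CompleteLattice γ]

def SupSolvable (A : Set α) (f : α → γ) : Prop :=
  A = ∅ ∨ ∃ a ∈ A, f a = ⨆ a ∈ A, f a

variable {A : Set α} {B : Set β} {f : α → γ} {g : β → γ}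

lemma biSup_le_biSup_of_forall_exists_le (hAB : ∀ a ∈ A, ∃ b ∈ B, f a ≤ g b) :
    ⨆ a ∈ A, f a ≤ ⨆ b ∈ B, g b :=
  iSup₂_le fun a ha ↦
    let ⟨b, hb, hab⟩ := hAB a ha
    le_iSup₂_of_le b hb hab

lemma SupSolvable.of_forall_exists_le (hA : SupSolvable A f)
    (hAB : ∀ a ∈ A, ∃ b ∈ B, f a ≤ g b) (hBA : ∀ b ∈ B, ∃ a ∈ A, g b ≤ f a) :
    SupSolvable B g := by
  rcases hA with hA | ⟨a, ha, hfa⟩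
  · refine Or.inl (Set.eq_empty_of_forall_notMem fun b hb ↦ ?_)
    obtain ⟨a, ha, -⟩ := hBA b hb
    exact hA.subset ha
  · obtain ⟨b, hb, hab⟩ := hAB a ha
    refine Or.inr ⟨b, hb, le_antisymm (le_iSup₂ (f := fun b _ ↦ g b) b hb) ?_⟩
    calc ⨆ b ∈ B, g b ≤ ⨆ a ∈ A, f a := biSup_le_biSup_of_forall_exists_le hBA
      _ = f a := hfa.symm
      _ ≤ g b := hab

end SupSolvable

theorem EReal.coe_finset_sum {ι : Type*} (s : Finset ι) (f : ι → ℝ) :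
    ((∑ i ∈ s, f i : ℝ) : EReal) = ∑ i ∈ s, (f i : EReal) :=
  map_sum (⟨⟨(↑), EReal.coe_zero⟩, EReal.coe_add⟩ : ℝ →+ EReal) f s

theorem EReal.sum_coe_mul_eq_coe_sum_mul_toReal {ι : Type*} (s : Finset ι) (w : ι → ℝ)
    {x : ι → EReal} (hx_top : ∀ i ∈ s, x i ≠ ⊤) (hx_bot : ∀ i ∈ s, x i ≠ ⊥) :
    ∑ i ∈ s, (w i : EReal) * x i = ((∑ i ∈ s, w i * (x i).toReal : ℝ) : EReal) := by
  rw [EReal.coe_finset_sum]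
  refine sum_congr rfl fun i hi ↦ ?_
  rw [EReal.coe_mul, EReal.coe_toReal (hx_top i hi) (hx_bot i hi)]

theorem Convex.exists_sum_fiberwise_smul_eq {ι κ E : Type*} [Fintype ι] [Fintype κ]
    [DecidableEq κ] [AddCommGroup E] [Module ℝ E] {U : κ → Set E}
    (hU : ∀ k, Convex ℝ (U k)) (hU_ne : ∀ k, (U k).Nonempty) (σ : ι → κ) {w : ι → ℝ}
    (hw : ∀ i, 0 ≤ w i) {x : ι → E} (hx : ∀ i, x i ∈ U (σ i)) :
    ∃ q : κ → E, (∀ k, q k ∈ U k) ∧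
      ∑ k, (∑ i with σ i = k, w i) • q k = ∑ i, w i • x i := by
  have hfibre : ∀ k, ∃ q ∈ U k,
      (∑ i with σ i = k, w i) • q = ∑ i with σ i = k, w i • x i := by
    intro k
    rcases (sum_nonneg fun i _ ↦ hw i : 0 ≤ ∑ i with σ i = k, w i).eq_or_lt with h0 | hpos
    · obtain ⟨q, hq⟩ := hU_ne k
      refine ⟨q, hq, ?_⟩
      rw [← h0, zero_smul, eq_comm]
      refine sum_eq_zero fun i hi ↦ ?_
      rw [(sum_eq_zero_iff_of_nonneg fun i _ ↦ hw i).1 h0.symm i hi, zero_smul]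
    · exact ⟨_, (hU k).centerMass_mem (fun i _ ↦ hw i) hpos
        fun i hi ↦ (mem_filter.1 hi).2 ▸ hx i, smul_inv_smul₀ hpos.ne' _⟩
  choose q hqU hq using hfibre
  exact ⟨q, hqU, by simp_rw [hq]; exact sum_fiberwise _ σ _⟩

theorem ConvexFn.convex_setOf_comp_le {E : Type*} [AddCommGroup E] [Module ℝ E] {n : ℕ}
    {f : (Fin n → ℝ) → EReal} (hf : ConvexFn f) (A : E →ₗ[ℝ] Fin n → ℝ) (b : E →ₗ[ℝ] ℝ) :
    Convex ℝ {x | f (A x) ≤ (b x : EReal)} :=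
  Convex.linear_preimage hf (A.prod b)

variable {gi : Fin I → (Fin dz → ℝ) → EReal}
  {c : Fin L → (Fin dz → ℝ) → EReal} {h : Fin J → (Fin dz → ℝ) → EReal} {μ : Fin J → ℝ}

theorem convex_Uset {k : Fin I} (hc : ∀ ℓ, ConvexFn (c ℓ)) (hh : ∀ j, ConvexFn (h j))
    (hg : ConvexFn fun z ↦ -gi k z) : Convex ℝ (Uset gi c h k) := by
  let zOf : (Fin dz → ℝ) × (Fin J → ℝ) × ℝ →ₗ[ℝ] Fin dz → ℝ := LinearMap.fst _ _ _
  let uOf : (Fin dz → ℝ) × (Fin J → ℝ) × ℝ →ₗ[ℝ] Fin J → ℝ :=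
    (LinearMap.fst _ _ _).comp (LinearMap.snd _ _ _)
  let tOf : (Fin dz → ℝ) × (Fin J → ℝ) × ℝ →ₗ[ℝ] ℝ :=
    (LinearMap.snd _ _ _).comp (LinearMap.snd _ _ _)
  have hUset : Uset gi c h k = (⋂ ℓ, {q | c ℓ (zOf q) ≤ ((0 : _ →ₗ[ℝ] ℝ) q : EReal)}) ∩
      (⋂ j, {q | h j (zOf q) ≤ ((LinearMap.proj j ∘ₗ uOf) q : EReal)}) ∩
      {q | -gi k (zOf q) ≤ ((-tOf) q : EReal)} := by
    ext q
    simp [Uset, zOf, uOf, tOf, EReal.coe_neg, EReal.neg_le_neg_iff, and_assoc]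
  rw [hUset]
  exact ((convex_iInter fun ℓ ↦ (hc ℓ).convex_setOf_comp_le _ _).inter
    (convex_iInter fun j ↦ (hh j).convex_setOf_comp_le _ _)).inter
    (hg.convex_setOf_comp_le _ _)

theorem mk_toReal_mem_Uset {k : Fin I} {z : Fin dz → ℝ} (hz : z ∈ SbarI gi c h k) :
    (z, fun j ↦ (h j z).toReal, (gi k z).toReal) ∈ Uset gi c h k :=
  ⟨hz.1, fun j ↦ EReal.le_coe_toReal (hz.2.1 j).ne, EReal.coe_toReal_le hz.2.2.ne'⟩

theorem exists_gFun_eq_of_mem_Sbar {z : Fin dz → ℝ} (hz : z ∈ Sbar gi c h) :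
    ∃ k, gFun gi z = gi k z ∧ z ∈ SbarI gi c h k := by
  obtain ⟨m, hm⟩ := Set.mem_iUnion.1 hz
  have : Nonempty (Fin I) := ⟨m⟩
  obtain ⟨k, hk⟩ := exists_eq_ciSup_of_finite (f := fun k ↦ gi k z)
  refine ⟨k, hk.symm, hm.1, hm.2.1, hm.2.2.trans_le ?_⟩
  rw [hk]
  exact le_iSup (fun k ↦ gi k z) m

theorem frFeas_of_mem_adbFeas
    {q : (Fin I → (Fin dz → ℝ) × (Fin J → ℝ) × ℝ) × (Fin I → ℝ)}
    (hq : q ∈ adbFeas gi c h μ) :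
    (fun i ↦ (q.1 i).1, q.2) ∈ frFeas gi c h μ ∧
      ((∑ i, q.2 i * (q.1 i).2.2 : ℝ) : EReal) ≤ frObj gi (fun i ↦ (q.1 i).1, q.2) := by
  obtain ⟨hU, hw0, hw1, hmom⟩ := hq
  have hw0' : ∀ i, (0 : EReal) ≤ q.2 i := fun i ↦ EReal.coe_nonneg.2 (hw0 i)
  have hobj : ((∑ i, q.2 i * (q.1 i).2.2 : ℝ) : EReal) ≤ frObj gi (fun i ↦ (q.1 i).1, q.2) := by
    rw [EReal.coe_finset_sum]
    refine sum_le_sum fun i _ ↦ ?_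
    rw [EReal.coe_mul]
    exact mul_le_mul_of_nonneg_left ((hU i).2.2.trans (le_iSup (fun k ↦ gi k _) i)) (hw0' i)
  refine ⟨⟨fun i ↦ Set.mem_iUnion.2 ⟨i, (hU i).1,
    fun j ↦ ((hU i).2.1 j).trans_lt (EReal.coe_lt_top _),
    (EReal.bot_lt_coe _).trans_le (hU i).2.2⟩, hw0, hw1, fun j ↦ ?_,
    ne_bot_of_le_ne_bot (EReal.coe_ne_bot _) hobj⟩, hobj⟩
  calc ∑ i, (q.2 i : EReal) * h j (q.1 i).1 ≤ ∑ i, (q.2 i : EReal) * ((q.1 i).2.1 j : EReal) :=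
        sum_le_sum fun i _ ↦ mul_le_mul_of_nonneg_left ((hU i).2.1 j) (hw0' i)
    _ = ((∑ i, q.2 i * (q.1 i).2.1 j : ℝ) : EReal) := by
        simp only [EReal.coe_finset_sum, EReal.coe_mul]
    _ ≤ μ j := EReal.coe_le_coe_iff.2 (hmom j)

theorem exists_mem_adbFeas_of_mem_frFeas (hG : AssumptionG gi) (hC : AssumptionC c)
    (hH : AssumptionH h) (hS : AssumptionS gi c h)
    {p : (Fin I → Fin dz → ℝ) × (Fin I → ℝ)} (hp : p ∈ frFeas gi c h μ) :
    ∃ q ∈ adbFeas gi c h μ, ((∑ i, q.2 i * (q.1 i).2.2 : ℝ) : EReal) = frObj gi p := by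
  obtain ⟨hz, hw0, hw1, hmom, -⟩ := hp
  choose σ hσ hzσ using fun i ↦ exists_gFun_eq_of_mem_Sbar (hz i)
  obtain ⟨q, hqU, hq⟩ := Convex.exists_sum_fiberwise_smul_eq
    (fun k ↦ convex_Uset (fun ℓ ↦ (hC ℓ).2.2) (fun j ↦ (hH j).2.2) (hG k).2.2)
    (fun k ↦ let ⟨_, hz⟩ := hS k; ⟨_, mk_toReal_mem_Uset hz⟩) σ hw0
    (fun i ↦ mk_toReal_mem_Uset (hzσ i))
  have hu : ∀ j, ∑ k, (∑ i with σ i = k, p.2 i) * (q k).2.1 j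
      = ∑ i, p.2 i * (h j (p.1 i)).toReal := fun j ↦ by
    simpa [Prod.snd_sum, Prod.fst_sum] using congrArg (fun y ↦ y.2.1 j) hq
  have ht : ∑ k, (∑ i with σ i = k, p.2 i) * (q k).2.2
      = ∑ i, p.2 i * (gi (σ i) (p.1 i)).toReal := by
    simpa [Prod.snd_sum] using congrArg (fun y ↦ y.2.2) hq
  have hh_top : ∀ j i, h j (p.1 i) ≠ ⊤ := fun j i ↦ ((hzσ i).2.1 j).ne
  have hh_bot : ∀ j i, h j (p.1 i) ≠ ⊥ := fun j i ↦ (hH j).1.1 _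
  have hg_top : ∀ i, gi (σ i) (p.1 i) ≠ ⊤ := fun i ↦ EReal.neg_eq_bot_iff.not.1 ((hG _).1.1 _)
  have hg_bot : ∀ i, gi (σ i) (p.1 i) ≠ ⊥ := fun i ↦ (hzσ i).2.2.ne'
  refine ⟨(q, fun k ↦ ∑ i with σ i = k, p.2 i),
    ⟨hqU, fun k ↦ (sum_nonneg fun i _ ↦ hw0 i : 0 ≤ ∑ i with σ i = k, p.2 i),
      (sum_fiberwise _ σ _).trans hw1, fun j ↦ ?_⟩, ?_⟩
  · have := hmom j
    rw [EReal.sum_coe_mul_eq_coe_sum_mul_toReal _ _ (fun i _ ↦ hh_top j i)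
      (fun i _ ↦ hh_bot j i), EReal.coe_le_coe_iff] at this
    exact (hu j).trans_le this
  · rw [ht, ← EReal.sum_coe_mul_eq_coe_sum_mul_toReal _ _ (fun i _ ↦ hg_top i)
      (fun i _ ↦ hg_bot i)]
    simp only [frObj, hσ]

theorem fr_eq_adb_general (dz I J L : ℕ)
    (gi : Fin I → (Fin dz → ℝ) → EReal) (c : Fin L → (Fin dz → ℝ) → EReal)
    (h : Fin J → (Fin dz → ℝ) → EReal) (μ : Fin J → ℝ)
    (hG : AssumptionG gi) (hC : AssumptionC c) (hH : AssumptionH h)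
    (hS : AssumptionS gi c h) :
    frVal gi c h μ = adbVal gi c h μ ∧
    (frSolvable gi c h μ ↔ adbSolvable gi c h μ) := by
  have hFR : ∀ p ∈ frFeas gi c h μ, ∃ q ∈ adbFeas gi c h μ,
      frObj gi p ≤ ((∑ i, q.2 i * (q.1 i).2.2 : ℝ) : EReal) := fun p hp ↦
    let ⟨q, hq, hobj⟩ := exists_mem_adbFeas_of_mem_frFeas hG hC hH hS hp
    ⟨q, hq, hobj.ge⟩
  have hADB : ∀ q ∈ adbFeas gi c h μ, ∃ p ∈ frFeas gi c h μ,
      ((∑ i, q.2 i * (q.1 i).2.2 : ℝ) : EReal) ≤ frObj gi p := fun _ hq ↦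
    ⟨_, frFeas_of_mem_adbFeas hq⟩
  exact ⟨le_antisymm (biSup_le_biSup_of_forall_exists_le hFR)
      (biSup_le_biSup_of_forall_exists_le hADB),
    ⟨fun hs ↦ SupSolvable.of_forall_exists_le hs hFR hADB,
      fun hs ↦ SupSolvable.of_forall_exists_le hs hADB hFR⟩⟩

/-- **Equivalence of (FR) and (AD-B)** (Proposition 4.2): under assumptions (G), (C),
(H) and (S), the suprema of (FR) and (AD-B) coincide, and (FR) is solvable if and only
if (AD-B) is solvable. -/
theorem fr_eq_adb (dz I J L : ℕ)
    (gi : Fin I → (Fin dz → ℝ) → EReal) (c : Fin L → (Fin dz → ℝ) → EReal)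
    (h : Fin J → (Fin dz → ℝ) → EReal) (μ : Fin J → ℝ)
    (hG : AssumptionG gi) (hC : AssumptionC c) (hH : AssumptionH h)
    (hS : AssumptionS gi c h) (hSne : (Sset c).Nonempty) :
    frVal gi c h μ = adbVal gi c h μ ∧
    (frSolvable gi c h μ ↔ adbSolvable gi c h μ) :=
  fr_eq_adb_general dz I J L gi c h μ hG hC hH hS
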